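/- arXiv:2102.07406 — 3 statements merged into one kernel-verified Lean document; each statement's English description precedes it below -/
import Mathlib

section
/- Let α, δ > 0, let 0 < κ < 1, let θ > 2κ/(1−κ), and let ϱ > 1. For A > 0 define S_i = 2^{(1+δ)·A·(1+θ)^{2i}} and T_i = 2^{α·A·(1+θ)^{2i+1}} for integers i ≥ 1. Then there exists A₀ > 0 such that for every A ≥ A₀ and every integer i ≥ 1, the series ∑_{j=1}^{∞} ϱ^{2j} · S_{i+j}^{−α(1−κ)} converges and ∑_{j=1}^{∞} ϱ^{2j} · S_{i+j}^{−α(1−κ)} ≤ 2 · ϱ^{−i} · T_i^{−(1+δ)}. -/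
/-!
Write `q = 1 + θ` and `ρ = 2 ^ L`. In base-2 exponents, the `j`-th term is at most
`2 ^ -(j+1)` times the right-hand side as soon as
`(i + 2(j+1)) L + (j+1) ≤ α(1+δ)A · q^(2i+1) · ((1-κ) q^(2j+1) - 1)`.
The condition `θ > 2κ/(1-κ)` is exactly `(1-κ) q > 1 + κ`, so by Bernoulli both factors
`q^(2i+1)` and `(1-κ) q^(2j+1) - 1` grow at least linearly in `i` and `j`, while the left-hand
side is only bilinear in `(1+i, 1+j)`; a large `A` therefore wins, and summing the geometric
series gives the bound.
-/

open Real

section ExponentGap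

variable {κ θ m : ℝ}

lemma mul_succ_le_pow_two_mul_add_one (hθ : 0 ≤ θ) (hm : m ≤ 1) (hmθ : m ≤ 2 * θ) (n : ℕ) :
    m * (n + 1) ≤ (1 + θ) ^ (2 * n + 1) := by
  have bernoulli := one_add_mul_le_pow (show -2 ≤ θ by linarith) (2 * n + 1)
  push_cast at bernoulli
  nlinarith [mul_le_mul_of_nonneg_right hmθ n.cast_nonneg]

lemma mul_succ_le_one_sub_mul_pow_sub_one (hκ : 0 ≤ κ) (hθ : 0 ≤ θ)
    (hgap : 1 + κ ≤ (1 - κ) * (1 + θ)) (hmκ : m ≤ κ) (hmθ : m ≤ 2 * θ) (n : ℕ) :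
    m * (n + 1) ≤ (1 - κ) * (1 + θ) ^ (2 * n + 1) - 1 := by
  have bernoulli := one_add_mul_le_pow (show -2 ≤ θ by linarith) (2 * n)
  push_cast at bernoulli
  have hprod : (1 + κ) * (1 + 2 * n * θ) ≤ (1 - κ) * (1 + θ) ^ (2 * n + 1) := by
    rw [pow_succ, mul_comm _ (1 + θ), ← mul_assoc]
    exact mul_le_mul hgap bernoulli (by positivity) (by linarith)
  nlinarith [mul_le_mul_of_nonneg_right hmθ n.cast_nonneg, mul_nonneg hκ hθ,
    mul_nonneg (mul_nonneg hκ hθ) n.cast_nonneg]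

lemma exists_linear_le_mul_pow_gap (hκ0 : 0 < κ) (hκ1 : κ < 1) (hθ : θ > 2 * κ / (1 - κ))
    {L : ℝ} (hL : 0 ≤ L) :
    ∃ c₀ > 0, ∀ c ≥ c₀, ∀ i j : ℕ, (i + 2 * (j + 1)) * L + (j + 1) ≤
      c * ((1 - κ) * (1 + θ) ^ (2 * (i + j + 1)) - (1 + θ) ^ (2 * i + 1)) := by
  have h1κ : 0 < 1 - κ := by linarith
  have hθ0 : 0 < θ := lt_trans (by positivity) hθ
  have hgap : 1 + κ ≤ (1 - κ) * (1 + θ) := by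
    have := (div_lt_iff₀ h1κ).mp hθ
    nlinarith
  set m := min κ (2 * θ)
  have hm : 0 < m := lt_min hκ0 (by positivity)
  refine ⟨2 * (L + 1) / m ^ 2, by positivity, fun c hc i j => ?_⟩
  have hc' : 2 * (L + 1) ≤ c * m ^ 2 := by rwa [ge_iff_le, div_le_iff₀ (by positivity)] at hc
  have hi := mul_succ_le_pow_two_mul_add_one hθ0.le ((min_le_left _ _).trans hκ1.le)
    (min_le_right _ _) i
  have hj := mul_succ_le_one_sub_mul_pow_sub_one hκ0.le hθ0.le hgap (min_le_left _ _)
    (min_le_right _ _) j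
  have hsplit : (1 - κ) * (1 + θ) ^ (2 * (i + j + 1)) - (1 + θ) ^ (2 * i + 1) =
      (1 + θ) ^ (2 * i + 1) * ((1 - κ) * (1 + θ) ^ (2 * j + 1) - 1) := by
    rw [show 2 * (i + j + 1) = (2 * i + 1) + (2 * j + 1) by ring, pow_add]; ring
  have hc0 : 0 ≤ c := le_trans (by positivity) hc
  have hi0 : (0 : ℝ) ≤ i := i.cast_nonneg
  have hj0 : (0 : ℝ) ≤ j := j.cast_nonneg
  calc (i + 2 * (j + 1)) * L + (j + 1) ≤ 2 * (L + 1) * ((i + 1) * (j + 1)) := by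
        nlinarith [mul_nonneg (mul_nonneg hL hi0) hj0, mul_nonneg hi0 hj0, mul_nonneg hL hj0]
    _ ≤ c * (m * (i + 1) * (m * (j + 1))) := by
        nlinarith [mul_le_mul_of_nonneg_right hc' (mul_nonneg (by linarith : (0 : ℝ) ≤ i + 1)
          (by linarith : (0 : ℝ) ≤ j + 1))]
    _ ≤ c * ((1 + θ) ^ (2 * i + 1) * ((1 - κ) * (1 + θ) ^ (2 * j + 1) - 1)) := by
        gcongr
    _ = _ := by rw [hsplit]

end ExponentGap

lemma pow_mul_two_rpow_le {ρ x y : ℝ} (hρ : 0 < ρ) {a b k : ℕ}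
    (h : (a + b) * logb 2 ρ + (k + 1) ≤ y - x) :
    ρ ^ a * (2 : ℝ) ^ x ≤ (ρ ^ b)⁻¹ * (2 : ℝ) ^ y / 2 / 2 ^ k := by
  have hpow : ∀ n : ℕ, ρ ^ n = (2 : ℝ) ^ (n * logb 2 ρ) := fun n => by
    rw [mul_comm, rpow_mul zero_le_two, rpow_logb two_pos one_lt_two.ne' hρ, rpow_natCast]
  rw [hpow, hpow, ← rpow_neg zero_le_two, ← rpow_natCast 2 k, div_div,
    mul_comm 2, ← rpow_add_one two_ne_zero, ← rpow_add two_pos, ← rpow_add two_pos,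
    ← rpow_sub two_pos]
  exact rpow_le_rpow_of_exponent_le one_le_two (by linarith)

lemma summable_and_tsum_le_of_le_geometric_two {f : ℕ → ℝ} {C : ℝ} (hf0 : ∀ j, 0 ≤ f j)
    (hf : ∀ j, f j ≤ C / 2 / 2 ^ j) : Summable f ∧ ∑' j, f j ≤ C := by
  have hs := (summable_geometric_two' C).of_nonneg_of_le hf0 hf
  exact ⟨hs, (hs.tsum_le_tsum hf (summable_geometric_two' C)).trans_eq (tsum_geometric_two' C)⟩

/-- condition (3.4), 'higher scales have little influence over lower scales':
for `S i = 2^((1+δ)A(1+θ)^(2i))` and `T i = 2^(αA(1+θ)^(2i+1))`, there is `A₀ > 0` such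
that for all `A ≥ A₀` and all `i ≥ 1`, the series `∑_{j=1}^∞ ρ^(2j) · S_{i+j}^(-α(1-κ))`
converges and is at most `2 · ρ^(-i) · T_i^(-(1+δ))`. -/
theorem stmt_5 (α δ κ θ ρ : ℝ) (hα : 0 < α) (hδ : 0 < δ)
    (hκ0 : 0 < κ) (hκ1 : κ < 1) (hθ : θ > 2 * κ / (1 - κ)) (hρ : 1 < ρ) :
    ∃ A₀ : ℝ, 0 < A₀ ∧ ∀ A : ℝ, A₀ ≤ A → ∀ i : ℕ, 1 ≤ i →
      Summable (fun j : ℕ =>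
        ρ ^ (2 * (j + 1)) *
          ((2 : ℝ) ^ ((1 + δ) * A * (1 + θ) ^ (2 * (i + j + 1)))) ^ (-(α * (1 - κ)))) ∧
      ∑' j : ℕ, ρ ^ (2 * (j + 1)) *
          ((2 : ℝ) ^ ((1 + δ) * A * (1 + θ) ^ (2 * (i + j + 1)))) ^ (-(α * (1 - κ)))
        ≤ 2 * (ρ ^ i)⁻¹ * ((2 : ℝ) ^ (α * A * (1 + θ) ^ (2 * i + 1))) ^ (-(1 + δ)) := by
  obtain ⟨c₀, hc₀, hgap⟩ := exists_linear_le_mul_pow_gap hκ0 hκ1 hθ (logb_pos one_lt_two hρ).le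
  refine ⟨c₀ / (α * (1 + δ)), by positivity, fun A hA i _ => ?_⟩
  have hc : c₀ ≤ α * (1 + δ) * A := by rwa [div_le_iff₀ (by positivity), mul_comm] at hA
  set C := (ρ ^ i)⁻¹ * ((2 : ℝ) ^ (α * A * (1 + θ) ^ (2 * i + 1))) ^ (-(1 + δ)) with hC_def
  have hC : 0 ≤ C := by positivity
  refine (summable_and_tsum_le_of_le_geometric_two (C := C) (fun j => by positivity)
    fun j => ?_).imp_right fun h => h.trans (by rw [mul_assoc]; linarith)
  rw [hC_def, ← rpow_mul zero_le_two, ← rpow_mul zero_le_two, mul_assoc]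
  refine pow_mul_two_rpow_le (by linarith) ?_
  push_cast
  linarith [hgap _ hc i j]
end

section
/- Let n and k be natural numbers with 2k ≤ n, and let p be a real number with 0 < p ≤ 1/2. Then ∑_{j=0}^{k} C(n, j) · (1−p)^j · p^{n−j} ≤ exp(n·(1/2 − p)) · (2p)^{n/4}. In particular, a Binomial(n, 1−p) random variable Y satisfies ℙ(Y ≤ k) ≤ exp(n(1/2 − p)) · (2p)^{n/4}. -/
/-!
Exponential tilting (Markov's inequality for `t ^ (-Y)`) with `t = √(2p) = exp (-a)`,
`a = -log (2p) / 2`: since `t ≤ 1`, each term with `j ≤ k` is at most its tilted version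
`C(n,j) ((1-p)t)^j p^(n-j) / t^k`, and the tilted terms sum to `((1-p)t + p)^n / t^k`.
As `2p ≤ t`, `1 + x ≤ exp x` gives `(1-p)t + p ≤ exp (1/2 - p) t`, and finally
`t^(n-k) ≤ t^(n/2) = (2p)^(n/4)` because `2k ≤ n`.
-/

open Finset Real

lemma sum_range_choose_mul_pow_le_div_pow {a b t : ℝ} (ha : 0 ≤ a) (hb : 0 ≤ b) (ht0 : 0 < t)
    (ht1 : t ≤ 1) (n k : ℕ) :
    ∑ j ∈ range (k + 1), (n.choose j : ℝ) * a ^ j * b ^ (n - j) ≤ (a * t + b) ^ n / t ^ k := by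
  set g : ℕ → ℝ := fun j ↦ (a * t) ^ j * b ^ (n - j) * n.choose j
  have hg : 0 ≤ g := fun j ↦ by positivity
  have h_tilt : ∀ j ∈ range (k + 1), (n.choose j : ℝ) * a ^ j * b ^ (n - j) ≤ g j / t ^ k := by
    intro j hj
    have hjk : t ^ k ≤ t ^ j := pow_le_pow_of_le_one ht0.le ht1 (by simpa [Nat.lt_succ_iff] using hj)
    rw [le_div_iff₀ (by positivity)]
    calc (n.choose j : ℝ) * a ^ j * b ^ (n - j) * t ^ k
        ≤ (n.choose j : ℝ) * a ^ j * b ^ (n - j) * t ^ j := by gcongr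
      _ = g j := by simp only [g]; ring
  -- terms with `j > n` vanish, so the partial sum is dominated by the full binomial sum
  have h_partial : ∑ j ∈ range (k + 1), g j ≤ ∑ j ∈ range (n + 1), g j :=
    calc ∑ j ∈ range (k + 1), g j ≤ ∑ j ∈ range (max k n + 1), g j :=
          sum_le_sum_of_subset_of_nonneg (range_subset_range.2 (by omega)) fun j _ _ ↦ hg j
      _ = ∑ j ∈ range (n + 1), g j := by
          refine (sum_subset (range_subset_range.2 (by omega)) fun j _ hj ↦ ?_).symm
          simp [g, Nat.choose_eq_zero_of_lt (show n < j by simpa using hj)]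
  calc ∑ j ∈ range (k + 1), (n.choose j : ℝ) * a ^ j * b ^ (n - j)
      ≤ ∑ j ∈ range (k + 1), g j / t ^ k := sum_le_sum h_tilt
    _ = (∑ j ∈ range (k + 1), g j) / t ^ k := (sum_div ..).symm
    _ ≤ (a * t + b) ^ n / t ^ k := by
        rw [add_pow]
        gcongr

lemma one_sub_mul_add_le_exp_mul {p t : ℝ} (ht0 : 0 ≤ t) (hpt : 2 * p ≤ t) :
    (1 - p) * t + p ≤ exp (1 / 2 - p) * t := by
  have h_exp : 3 / 2 - p ≤ exp (1 / 2 - p) := by linarith [add_one_le_exp (1 / 2 - p)]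
  nlinarith [mul_le_mul_of_nonneg_right h_exp ht0]

lemma sqrt_pow_le_rpow {x r : ℝ} (hx0 : 0 < x) (hx1 : x ≤ 1) {m : ℕ} (hr : r ≤ m / 2) :
    √x ^ m ≤ x ^ r := by
  rw [sqrt_eq_rpow, ← rpow_natCast, ← rpow_mul hx0.le]
  exact rpow_le_rpow_of_exponent_ge hx0 hx1 (by linarith)

/-- quantitative lower-tail Chernoff bound for Binomial(n, 1-p)
(end of Step 2 in the proof of Proposition 4.1): for `2k ≤ n` and `0 < p ≤ 1/2`,
`∑_{j=0}^k C(n,j) (1-p)^j p^(n-j) ≤ exp(n(1/2-p)) · (2p)^(n/4)`. -/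
theorem stmt_8 (n k : ℕ) (hnk : 2 * k ≤ n) (p : ℝ) (hp0 : 0 < p) (hp1 : p ≤ 1 / 2) :
    ∑ j ∈ Finset.range (k + 1), (Nat.choose n j : ℝ) * (1 - p) ^ j * p ^ (n - j)
      ≤ Real.exp (n * (1 / 2 - p)) * (2 * p) ^ ((n : ℝ) / 4) := by
  set t := √(2 * p)
  have ht0 : 0 < t := sqrt_pos.2 (by linarith)
  have ht1 : t ≤ 1 := sqrt_le_one.2 (by linarith)
  have hpt : 2 * p ≤ t := by
    rw [show 2 * p = t ^ 2 from (sq_sqrt (by linarith)).symm]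
    nlinarith
  have hnk' : (n : ℝ) / 4 ≤ ((n - k : ℕ) : ℝ) / 2 := by
    rw [Nat.cast_sub (by omega)]
    linarith [show (2 * k : ℝ) ≤ n by exact_mod_cast hnk]
  calc ∑ j ∈ range (k + 1), (n.choose j : ℝ) * (1 - p) ^ j * p ^ (n - j)
      ≤ ((1 - p) * t + p) ^ n / t ^ k :=
        sum_range_choose_mul_pow_le_div_pow (by linarith) hp0.le ht0 ht1 n k
    _ ≤ (exp (1 / 2 - p) * t) ^ n / t ^ k := by
        gcongr
        · exact add_nonneg (mul_nonneg (by linarith) ht0.le) hp0.le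
        · exact one_sub_mul_add_le_exp_mul ht0.le hpt
    _ = exp (n * (1 / 2 - p)) * t ^ (n - k) := by
        rw [mul_pow, ← exp_nat_mul, pow_sub₀ t ht0.ne' (by omega)]
        ring
    _ ≤ exp (n * (1 / 2 - p)) * (2 * p) ^ ((n : ℝ) / 4) := by
        gcongr
        exact sqrt_pow_le_rpow (by linarith) (by linarith) hnk'
end

section
/- Let (X_i)_{i∈F} be a nonempty finite family of nonnegative random variables on a probability space (Ω, ℱ, ℙ), let c ≥ 0 be such that E[e^{X_i}] ≤ e^c for every i ∈ F, and let g be a real number with 0 < g < 1. Then E[exp(g · max_{i∈F} X_i)] ≤ |F|^g · e^{gc} / (1 − g), where |F| is the cardinality of F. -/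
/-!
Dominate the maximum by the sum: `exp (g · max_i X i) ≤ (∑ i, exp (X i)) ^ g`. Since `t ↦ t ^ g`
is concave for `0 ≤ g ≤ 1`, Jensen's inequality bounds the expectation of the right-hand side by
`(∑ i, E[exp (X i)]) ^ g ≤ (|F| e^c) ^ g`, which is even sharper than claimed since `1 - g ≤ 1`.
-/

open MeasureTheory

lemma Real.exp_ciSup_le_sum_exp {ι : Type*} [Fintype ι] [Nonempty ι] (f : ι → ℝ) :
    Real.exp (⨆ i, f i) ≤ ∑ i, Real.exp (f i) := by
  obtain ⟨i₀, hi₀⟩ := exists_eq_ciSup_of_finite (f := f)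
  rw [← hi₀]
  exact Finset.single_le_sum (fun i _ => (Real.exp_pos (f i)).le) (Finset.mem_univ i₀)

section RpowOfIntegrable

variable {Ω : Type*} [MeasurableSpace Ω] {μ : Measure Ω} {Y : Ω → ℝ} {p : ℝ}

lemma MeasureTheory.Integrable.rpow_of_le_one [IsFiniteMeasure μ] (hY : Integrable Y μ)
    (hY_nonneg : 0 ≤ᵐ[μ] Y) (hp₀ : 0 ≤ p) (hp₁ : p ≤ 1) :
    Integrable (fun ω => Y ω ^ p) μ := by
  refine (hY.add (integrable_const 1)).mono'
    ((Real.continuous_rpow_const hp₀).comp_aestronglyMeasurable hY.1) ?_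
  filter_upwards [hY_nonneg] with ω hω
  rw [Pi.zero_apply] at hω
  rw [Pi.add_apply, Real.norm_of_nonneg (Real.rpow_nonneg hω p)]
  rcases le_total (Y ω) 1 with h | h
  · have : Y ω ^ p ≤ 1 := Real.rpow_le_one hω h hp₀
    linarith
  · have : Y ω ^ p ≤ Y ω := Real.rpow_le_self_of_one_le h hp₁
    linarith

lemma MeasureTheory.integral_rpow_le_rpow_integral [IsProbabilityMeasure μ]
    (hY : Integrable Y μ) (hY_nonneg : 0 ≤ᵐ[μ] Y) (hp₀ : 0 ≤ p) (hp₁ : p ≤ 1) :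
    ∫ ω, Y ω ^ p ∂μ ≤ (∫ ω, Y ω ∂μ) ^ p :=
  (Real.concaveOn_rpow hp₀ hp₁).le_map_integral (Real.continuous_rpow_const hp₀).continuousOn
    isClosed_Ici hY_nonneg hY (hY.rpow_of_le_one hY_nonneg hp₀ hp₁)

end RpowOfIntegrable

lemma MeasureTheory.integral_exp_mul_ciSup_le {Ω : Type*} [MeasurableSpace Ω] {μ : Measure Ω}
    [IsProbabilityMeasure μ] {ι : Type*} [Fintype ι] [Nonempty ι] {X : ι → Ω → ℝ} {c g : ℝ}
    (hint : ∀ i, Integrable (fun ω => Real.exp (X i ω)) μ)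
    (hbound : ∀ i, ∫ ω, Real.exp (X i ω) ∂μ ≤ Real.exp c) (hg₀ : 0 ≤ g) (hg₁ : g ≤ 1) :
    ∫ ω, Real.exp (g * ⨆ i, X i ω) ∂μ ≤ (Fintype.card ι : ℝ) ^ g * Real.exp (g * c) := by
  set Y : Ω → ℝ := fun ω => ∑ i, Real.exp (X i ω)
  have hY : Integrable Y μ := integrable_finsetSum _ fun i _ => hint i
  have hY_nonneg : 0 ≤ᵐ[μ] Y :=
    .of_forall fun ω => Finset.sum_nonneg fun i _ => (Real.exp_pos _).le
  have hpointwise : ∀ ω, Real.exp (g * ⨆ i, X i ω) ≤ Y ω ^ g := fun ω => by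
    rw [mul_comm, Real.exp_mul]
    exact Real.rpow_le_rpow (Real.exp_pos _).le (Real.exp_ciSup_le_sum_exp _) hg₀
  have hintegral_Y : ∫ ω, Y ω ∂μ ≤ Fintype.card ι * Real.exp c := by
    rw [integral_finsetSum _ fun i _ => hint i]
    simpa using Finset.sum_le_sum fun i (_ : i ∈ Finset.univ) => hbound i
  calc ∫ ω, Real.exp (g * ⨆ i, X i ω) ∂μ
      ≤ ∫ ω, Y ω ^ g ∂μ :=
        integral_mono_of_nonneg (.of_forall fun ω => (Real.exp_pos _).le)
          (hY.rpow_of_le_one hY_nonneg hg₀ hg₁) (.of_forall hpointwise)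
    _ ≤ (∫ ω, Y ω ∂μ) ^ g := integral_rpow_le_rpow_integral hY hY_nonneg hg₀ hg₁
    _ ≤ (Fintype.card ι * Real.exp c) ^ g :=
        Real.rpow_le_rpow (integral_nonneg_of_ae hY_nonneg) hintegral_Y hg₀
    _ = (Fintype.card ι : ℝ) ^ g * Real.exp (g * c) := by
        rw [Real.mul_rpow (Nat.cast_nonneg _) (Real.exp_pos c).le, ← Real.exp_mul, mul_comm c g]

theorem stmt_11_general {Ω : Type*} [MeasurableSpace Ω] (P : Measure Ω) [IsProbabilityMeasure P]
    {F : Type*} [Fintype F] [Nonempty F] (X : F → Ω → ℝ)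
    (c : ℝ)
    (hint : ∀ i, Integrable (fun ω => Real.exp (X i ω)) P)
    (hbound : ∀ i, ∫ ω, Real.exp (X i ω) ∂P ≤ Real.exp c)
    (g : ℝ) (hg0 : 0 < g) (hg1 : g < 1) :
    ∫ ω, Real.exp (g * ⨆ i, X i ω) ∂P
      ≤ (Fintype.card F : ℝ) ^ g * Real.exp (g * c) / (1 - g) := by
  have hmain := integral_exp_mul_ciSup_le hint hbound hg0.le hg1.le
  have hrhs_nonneg : 0 ≤ (Fintype.card F : ℝ) ^ g * Real.exp (g * c) := by positivity
  calc ∫ ω, Real.exp (g * ⨆ i, X i ω) ∂P ≤ (Fintype.card F : ℝ) ^ g * Real.exp (g * c) := hmain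
    _ ≤ (Fintype.card F : ℝ) ^ g * Real.exp (g * c) / (1 - g) :=
        le_div_self hrhs_nonneg (by linarith) (by linarith)

/-- exponential moment of the maximum of a finite family (Lemma 5.4,
estimate (5.21)): if `E[e^(X i)] ≤ e^c` for every `i` in a nonempty finite family and
`0 < g < 1`, then `E[exp(g · max_i X i)] ≤ |F|^g · e^(gc)/(1-g)`. -/
theorem stmt_11 {Ω : Type*} [MeasurableSpace Ω] (P : Measure Ω) [IsProbabilityMeasure P]
    {F : Type*} [Fintype F] [Nonempty F] (X : F → Ω → ℝ)
    (hmeas : ∀ i, Measurable (X i)) (hnonneg : ∀ i ω, 0 ≤ X i ω)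
    (c : ℝ) (hc : 0 ≤ c)
    (hint : ∀ i, Integrable (fun ω => Real.exp (X i ω)) P)
    (hbound : ∀ i, ∫ ω, Real.exp (X i ω) ∂P ≤ Real.exp c)
    (g : ℝ) (hg0 : 0 < g) (hg1 : g < 1) :
    ∫ ω, Real.exp (g * ⨆ i, X i ω) ∂P
      ≤ (Fintype.card F : ℝ) ^ g * Real.exp (g * c) / (1 - g) :=
  stmt_11_general P X c hint hbound g hg0 hg1
end
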